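/- arXiv:0711.4043 — 2 statements merged into one kernel-verified Lean document; each statement's English description precedes it below -/
import Mathlib

section
/- Suppose f(x₁,…,x_d, y) = Σᵢ₌₀ⁿ fᵢ(x₁,…,x_d)·yⁱ is an upper polynomial in d+1 variables. Then consecutive coefficients interlace: for each 0 ≤ i < n, if fᵢ and fᵢ₊₁ are not both zero, then fᵢ + y·fᵢ₊₁ is an upper polynomial in d+1 variables. -/
/-!
Fix `σ` in the upper half plane and let `p(y) = f(σ, y)`. Its roots lie in the closed lower half
plane, so `Im (p'/p) ≤ 0` on the closed upper half plane; at `y = 0`, applied to the derivatives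
`p⁽ⁱ⁾` (upper again by Gauss–Lucas), this gives `Im (pᵢ₊₁ · conj pᵢ) ≤ 0`, which is exactly
`pᵢ + τ pᵢ₊₁ ≠ 0` for `Im τ > 0` unless `pᵢ = pᵢ₊₁ = 0`.

That degenerate case cannot occur. First, the leading coefficient of `f` in `y` has no zero `σ`
in the upper half plane. Otherwise take a line `x = σ + t v` on which it is not identically zero,
write `c_k(t)` for the coefficients of `f(σ + t v, ·)` and let `j < deg f` be the degree at `t = 0`.
The pencil inequality `Im (c_{j+1}(t) · conj c_j(t)) ≤ 0` near `t = 0`, with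
`c_j(0) ≠ 0 = c_{j+1}(0)`, forces `c_{j+1} ≡ 0`: a polynomial vanishing at `0` but not
identically takes values in every direction near `0`. Doing this for every real translate
`y ↦ y + s` kills the `(j+1)`-st Hasse derivative of `f(σ + t v, ·)` for all `t`, hence also the
leading coefficient along the line. Via `y ↦ -1/y` the same holds for the trailing coefficient.
So `p` would be an upper polynomial with two consecutive zero coefficients strictly between
nonzero ones. Differentiating and reversing turns this into an upper polynomial whose roots have
vanishing first and second elementary symmetric functions; lying in a half plane, they are all
`0`, contradicting a nonzero constant term.
-/

/-- `f ∈ ℂ[x₁,…,x_d]` is an *upper polynomial* if it does not vanish when all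
variables are given values in the open upper half plane.  (The zero polynomial
never satisfies this, so it is automatically excluded.) -/
def IsUpper {d : ℕ} (f : MvPolynomial (Fin d) ℂ) : Prop :=
  ∀ σ : Fin d → ℂ, (∀ i, 0 < (σ i).im) → MvPolynomial.eval σ f ≠ 0

/-- A polynomial in the variables `x₁,…,x_d` and one distinguished variable `y`
(encoded as a univariate polynomial over `ℂ[x₁,…,x_d]`) is an upper polynomial
in `d+1` variables. -/
def IsUpperY {d : ℕ} (f : Polynomial (MvPolynomial (Fin d) ℂ)) : Prop :=
  ∀ (σ : Fin d → ℂ) (τ : ℂ), (∀ i, 0 < (σ i).im) → 0 < τ.im →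
    Polynomial.eval₂ (MvPolynomial.eval σ) τ f ≠ 0

open Polynomial Filter Topology ComplexConjugate

theorem Complex.re_multiset_sum (s : Multiset ℂ) : s.sum.re = (s.map Complex.re).sum :=
  map_multiset_sum Complex.reAddGroupHom s

theorem Complex.im_multiset_sum (s : Multiset ℂ) : s.sum.im = (s.map Complex.im).sum :=
  map_multiset_sum Complex.imAddGroupHom s

theorem Multiset.sq_sum_eq_sum_sq_add_two_mul_esymm {R : Type*} [CommSemiring R]
    (s : Multiset R) : s.sum ^ 2 = (s.map (· ^ 2)).sum + 2 * s.esymm 2 := by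
  induction s using Multiset.induction_on with
  | empty =>
    simp [Multiset.esymm, Multiset.powersetCard_eq_empty 2 (s := (0 : Multiset R)) (by simp)]
  | cons a s ih =>
    have h2 : (a ::ₘ s).esymm 2 = s.esymm 2 + a * s.sum := by
      simp [Multiset.esymm, Multiset.powersetCard_cons, Multiset.powersetCard_one]
      rw [Multiset.sum_map_mul_left, Multiset.map_id']
    rw [h2, Multiset.sum_cons, Multiset.map_cons, Multiset.sum_cons, add_sq, ih]
    ring

theorem Multiset.eq_zero_of_im_nonpos_of_esymm_eq_zero {s : Multiset ℂ}
    (him : ∀ z ∈ s, z.im ≤ 0) (h1 : s.esymm 1 = 0) (h2 : s.esymm 2 = 0) : ∀ z ∈ s, z = 0 := by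
  have hsum : s.sum = 0 := by simpa [Multiset.esymm, Multiset.powersetCard_one] using h1
  have hreal : ∀ z ∈ s, z.im = 0 := by
    have hsum_im : (s.map fun z => -z.im).sum = 0 := by
      rw [Multiset.sum_map_neg, ← Complex.im_multiset_sum, hsum, Complex.zero_im, neg_zero]
    intro z hz
    have := Multiset.all_zero_of_le_zero_le_of_sum_eq_zero (by simpa using him) hsum_im
      (-z.im) (Multiset.mem_map_of_mem _ hz)
    linarith
  have hsq : (s.map fun z => z.re ^ 2).sum = 0 := by
    have hsq : (s.map (· ^ 2)).sum = 0 := by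
      simpa [hsum, h2] using (s.sq_sum_eq_sum_sq_add_two_mul_esymm).symm
    have : (s.map (· ^ 2)).sum.re = 0 := by rw [hsq, Complex.zero_re]
    rwa [Complex.re_multiset_sum, Multiset.map_map,
      Multiset.map_congr rfl (g := fun z => z.re ^ 2) fun z hz => by simp [sq, hreal z hz]] at this
  intro z hz
  have := Multiset.all_zero_of_le_zero_le_of_sum_eq_zero (by simp [sq_nonneg]) hsq
    (z.re ^ 2) (Multiset.mem_map_of_mem _ hz)
  exact Complex.ext (by simpa using this) (hreal z hz)

theorem Polynomial.natDegree_iterate_derivative_eq {R : Type*} [Semiring R]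
    [Module.IsTorsionFree ℕ R] (p : R[X]) {k : ℕ} (hk : k ≤ p.natDegree) :
    (derivative^[k] p).natDegree = p.natDegree - k := by
  rcases eq_or_ne p 0 with rfl | hp
  · simp
  refine le_antisymm (natDegree_iterate_derivative p k) (le_natDegree_of_ne_zero ?_)
  rw [coeff_iterate_derivative, Nat.sub_add_cancel hk]
  exact smul_ne_zero (Nat.descFactorial_pos.2 hk).ne' (leadingCoeff_ne_zero.2 hp)

theorem Polynomial.coeff_map_evalRingHom {R : Type*} [CommSemiring R] (Φ : R[X][X]) (t : R)
    (k : ℕ) : (Φ.map (evalRingHom t)).coeff k = (Φ.coeff k).eval t := by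
  rw [coeff_map, coe_evalRingHom]

theorem Polynomial.eq_zero_of_eventually_im_mul_nonpos {g : ℂ[X]} {h : ℂ → ℂ}
    (hh : ContinuousAt h 0) (h0 : h 0 ≠ 0) (hg : g.eval 0 = 0)
    (hgh : ∀ᶠ t in 𝓝 0, (g.eval t * h t).im ≤ 0) : g = 0 := by
  by_contra hg0
  obtain ⟨g₁, hg₁, hdvd⟩ := g.exists_eq_pow_rootMultiplicity_mul_and_not_dvd hg0 0
  set k := rootMultiplicity 0 g
  have hk : 0 < k := (rootMultiplicity_pos hg0).2 hg
  set c := g₁.eval 0 * h 0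
  have hc : c ≠ 0 := mul_ne_zero (fun h => hdvd (dvd_iff_isRoot.2 h)) h0
  -- Along the ray `r ↦ r u` with `uᵏ c = I |c|²`, `g h ≈ rᵏ uᵏ c` leaves the lower half plane.
  obtain ⟨u, hu⟩ := IsAlgClosed.exists_pow_nat_eq (Complex.I * conj c) hk
  have hray : Tendsto (fun r : ℝ => (r : ℂ) * u) (𝓝[>] 0) (𝓝 0) := by
    have : Continuous fun r : ℝ => (r : ℂ) * u := by fun_prop
    simpa using (this.tendsto 0).mono_left nhdsWithin_le_nhds
  have hlim : Tendsto (fun r : ℝ => (u ^ k * (g₁.eval (r * u) * h (r * u))).im) (𝓝[>] 0)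
      (𝓝 (Complex.normSq c)) := by
    have hc' : (u ^ k * c).im = Complex.normSq c := by
      rw [hu, mul_assoc, mul_comm (conj c), Complex.mul_conj]
      simp
    rw [← hc']
    refine (Complex.continuous_im.tendsto _).comp (tendsto_const_nhds.mul ?_)
    exact ((g₁.continuous.tendsto 0).comp hray).mul (hh.tendsto.comp hray)
  obtain ⟨r, ⟨hr : 0 < r, hle⟩, hgt⟩ := ((eventually_mem_nhdsWithin.and
    (hray.eventually hgh)).and (hlim.eventually (lt_mem_nhds (Complex.normSq_pos.2 hc)))).exists
  rw [hg₁, eval_mul, eval_pow, eval_sub, eval_X, eval_C, sub_zero, mul_pow, mul_assoc,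
    mul_assoc, ← Complex.ofReal_pow, Complex.im_ofReal_mul] at hle
  exact (mul_pos (pow_pos hr k) hgt).not_ge hle

-- `(f.reverse.comp (-X))(y) = yⁿ f(-1/y)` with `n = f.natDegree`, and `y ↦ -1/y` preserves the
-- upper half plane.
theorem Polynomial.eval₂_reverse_comp_neg_X_ne_zero {R : Type*} [CommRing R] (φ : R →+* ℂ)
    {f : R[X]} (hf : ∀ z : ℂ, 0 < z.im → f.eval₂ φ z ≠ 0) {z : ℂ} (hz : 0 < z.im) :
    (f.reverse.comp (-X)).eval₂ φ z ≠ 0 := by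
  have hz0 : z ≠ 0 := by rintro rfl; simp at hz
  let _ : Invertible (-z⁻¹) := invertibleOfNonzero (by simpa using hz0)
  have hinv : ⅟(-z⁻¹) = -z := by rw [invOf_eq_inv, inv_neg, inv_inv]
  rw [eval₂_comp, eval₂_neg, eval₂_X, ← hinv, Ne, eval₂_reverse_eq_zero_iff]
  refine hf _ ?_
  rw [Complex.neg_im, Complex.inv_im, neg_div, neg_neg]
  exact div_pos hz (Complex.normSq_pos.2 hz0)

theorem Polynomial.coeff_reverse_comp_neg_X {R : Type*} [CommRing R] (p : R[X]) {l : ℕ}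
    (hl : l ≤ p.natDegree) :
    (p.reverse.comp (-X)).coeff l = p.coeff (p.natDegree - l) * (-1) ^ l := by
  rw [show (-X : R[X]) = C (-1) * X by simp, comp_C_mul_X_coeff, coeff_reverse, revAt_le hl]

theorem Polynomial.natDegree_reverse_comp_neg_X {R : Type*} [CommRing R] [IsDomain R]
    {p : R[X]} (h0 : p.coeff 0 ≠ 0) : (p.reverse.comp (-X)).natDegree = p.natDegree := by
  rw [natDegree_comp, natDegree_neg, natDegree_X, mul_one, reverse_natDegree,
    natTrailingDegree_eq_zero.2 (Or.inr h0), Nat.sub_zero]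

def IsUpper₁ (p : ℂ[X]) : Prop :=
  ∀ z : ℂ, 0 < z.im → p.eval z ≠ 0

namespace IsUpper₁

variable {p : ℂ[X]}

theorem ne_zero (hp : IsUpper₁ p) : p ≠ 0 := by
  rintro rfl
  exact hp Complex.I (by simp) eval_zero

theorem im_nonpos_of_mem_roots (hp : IsUpper₁ p) {r : ℂ} (hr : r ∈ p.roots) : r.im ≤ 0 :=
  not_lt.1 fun h => hp r h (isRoot_of_mem_roots hr)

theorem im_eval_derivative_mul_conj_nonpos (hp : IsUpper₁ p) {z : ℂ} (hz : 0 ≤ z.im) :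
    ((derivative p).eval z * conj (p.eval z)).im ≤ 0 := by
  by_cases h0 : p.eval z = 0
  · simp [h0]
  have hlog := (IsAlgClosed.splits p).eval_derivative_div_eval_of_ne_zero h0
  have hfactor : (derivative p).eval z * conj (p.eval z)
      = (derivative p).eval z / p.eval z * (Complex.normSq (p.eval z) : ℂ) := by
    rw [← Complex.mul_conj]; field_simp
  rw [hfactor, Complex.im_mul_ofReal, hlog]
  refine mul_nonpos_of_nonpos_of_nonneg ?_ (Complex.normSq_nonneg _)
  rw [Complex.im_multiset_sum, Multiset.map_map]
  calc _ ≤ (p.roots.map fun _ => (0 : ℝ)).sum := Multiset.sum_map_le_sum_map _ _ fun r hr => ?_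
    _ = 0 := by simp
  have : 0 ≤ (z - r).im := by rw [Complex.sub_im]; linarith [hp.im_nonpos_of_mem_roots hr]
  simp only [Function.comp_apply, one_div, Complex.inv_im, neg_div, neg_nonpos]
  exact div_nonneg this (Complex.normSq_nonneg _)

protected theorem derivative (hp : IsUpper₁ p) (hdeg : 0 < p.natDegree) :
    IsUpper₁ (derivative p) := by
  intro z hz hroot
  have hmem : z ∈ (derivative p).rootSet ℂ := by
    rw [mem_rootSet]
    exact ⟨derivative_ne_zero.2 hdeg.ne', by simpa using hroot⟩
  have hhull : convexHull ℝ (p.rootSet ℂ) ⊆ {w : ℂ | w.im ≤ 0} := by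
    refine convexHull_min (fun w hw => ?_) (convex_halfSpace_le Complex.imLm.isLinear 0)
    rw [mem_rootSet] at hw
    exact not_lt.1 fun h => hp w h (by simpa using hw.2)
  exact (hhull (rootSet_derivative_subset_convexHull_rootSet
    (natDegree_pos_iff_degree_pos.1 hdeg) hmem)).not_gt hz

theorem iterate_derivative (hp : IsUpper₁ p) {k : ℕ} (hk : k ≤ p.natDegree) :
    IsUpper₁ (derivative^[k] p) := by
  induction k with
  | zero => exact hp
  | succ k ih =>
    rw [Function.iterate_succ_apply']
    refine (ih (by omega)).derivative ?_
    rw [natDegree_iterate_derivative_eq p (by omega)]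
    omega

theorem im_coeff_succ_mul_conj_coeff_nonpos (hp : IsUpper₁ p) (i : ℕ) :
    (p.coeff (i + 1) * conj (p.coeff i)).im ≤ 0 := by
  rcases lt_or_ge p.natDegree (i + 1) with hi | hi
  · simp [coeff_eq_zero_of_natDegree_lt hi]
  have h := (hp.iterate_derivative (k := i) (by omega)).im_eval_derivative_mul_conj_nonpos
    (z := 0) le_rfl
  rw [← coeff_zero_eq_eval_zero, ← coeff_zero_eq_eval_zero, coeff_derivative,
    coeff_iterate_derivative, coeff_iterate_derivative, zero_add, zero_add, add_comm 1 i] at h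
  simp only [nsmul_eq_mul, map_mul, map_natCast, Nat.cast_zero, zero_add, mul_one] at h
  set a := (i + 1).descFactorial i
  set b := i.descFactorial i
  have hab : (0 : ℝ) < (a * b : ℕ) :=
    mod_cast Nat.mul_pos (Nat.descFactorial_pos.2 (by omega)) (Nat.descFactorial_pos.2 le_rfl)
  rw [show (a : ℂ) * p.coeff (i + 1) * (b * conj (p.coeff i))
      = ((a * b : ℕ) : ℝ) * (p.coeff (i + 1) * conj (p.coeff i)) by push_cast; ring,
    Complex.im_ofReal_mul] at h
  exact nonpos_of_mul_nonpos_right h hab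

theorem coeff_add_mul_coeff_succ_ne_zero (hp : IsUpper₁ p) {i : ℕ}
    (h : ¬(p.coeff i = 0 ∧ p.coeff (i + 1) = 0)) {z : ℂ} (hz : 0 < z.im) :
    p.coeff i + z * p.coeff (i + 1) ≠ 0 := by
  intro hzero
  have hi1 : p.coeff (i + 1) ≠ 0 := fun h1 => h ⟨by simpa [h1] using hzero, h1⟩
  have hle := hp.im_coeff_succ_mul_conj_coeff_nonpos i
  rw [eq_neg_of_add_eq_zero_left hzero, map_neg, map_mul, mul_neg, Complex.neg_im,
    mul_left_comm, Complex.mul_conj, Complex.mul_im, Complex.ofReal_re, Complex.ofReal_im,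
    Complex.conj_im, Complex.conj_re] at hle
  nlinarith [Complex.normSq_pos.2 hi1]

protected theorem taylor (hp : IsUpper₁ p) (s : ℝ) : IsUpper₁ (taylor (s : ℂ) p) :=
  fun z hz => by
    rw [taylor_eval]
    exact hp _ (by simpa using hz)

theorem reverse_comp_neg_X (hp : IsUpper₁ p) : IsUpper₁ (p.reverse.comp (-X)) :=
  fun _ hz => eval₂_reverse_comp_neg_X_ne_zero (RingHom.id ℂ) hp hz

theorem eq_zero_of_mem_roots_of_coeff_eq_zero (hp : IsUpper₁ p) {n : ℕ}
    (hn : p.natDegree = n + 2) (h1 : p.coeff (n + 1) = 0) (h2 : p.coeff n = 0) {r : ℂ}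
    (hr : r ∈ p.roots) : r = 0 := by
  have hvieta (k : ℕ) (hk : k ≤ 2) :
      p.coeff (n + 2 - k) = p.leadingCoeff * (-1) ^ k * p.roots.esymm k := by
    rw [coeff_eq_esymm_roots_of_card IsAlgClosed.card_roots_eq_natDegree (by omega), hn,
      Nat.sub_sub_self (by omega : k ≤ n + 2)]
  have hlc := leadingCoeff_ne_zero.2 hp.ne_zero
  refine Multiset.eq_zero_of_im_nonpos_of_esymm_eq_zero (fun _ => hp.im_nonpos_of_mem_roots)
    ?_ ?_ r hr
  · simpa [h1, hlc] using (hvieta 1 (by norm_num)).symm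
  · simpa [h2, hlc] using (hvieta 2 le_rfl).symm

theorem natDegree_eq_zero_of_coeff_one_eq_zero_of_coeff_two_eq_zero (hp : IsUpper₁ p)
    (h0 : p.coeff 0 ≠ 0) (h1 : p.coeff 1 = 0) (h2 : p.coeff 2 = 0) : p.natDegree = 0 := by
  have hlc : p.coeff p.natDegree ≠ 0 := leadingCoeff_ne_zero.2 hp.ne_zero
  by_contra hN
  obtain ⟨n, hn⟩ : ∃ n, p.natDegree = n + 3 := Nat.exists_eq_add_of_le' (by
    by_contra! h
    interval_cases hd : p.natDegree <;> simp_all)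
  set P := p.reverse.comp (-X)
  have hP : IsUpper₁ P := hp.reverse_comp_neg_X
  have hdeg : P.natDegree = (n + 1) + 2 := by rw [natDegree_reverse_comp_neg_X h0, hn]
  have hcoeff (l : ℕ) (hl : l ≤ n + 3) : P.coeff l = p.coeff (n + 3 - l) * (-1) ^ l := by
    rw [coeff_reverse_comp_neg_X p (by omega), hn]
  have hroots (r : ℂ) (hr : r ∈ P.roots) : r = 0 :=
    hP.eq_zero_of_mem_roots_of_coeff_eq_zero hdeg
      (by rw [hcoeff _ (by omega), show n + 3 - (n + 1 + 1) = 1 by omega, h1, zero_mul])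
      (by rw [hcoeff _ (by omega), show n + 3 - (n + 1) = 2 by omega, h2, zero_mul]) hr
  obtain ⟨r, hr⟩ := Multiset.card_pos_iff_exists_mem.1
    (by rw [IsAlgClosed.card_roots_eq_natDegree, hdeg]; omega : 0 < Multiset.card P.roots)
  have hP0 := isRoot_of_mem_roots hr
  rw [hroots r hr, IsRoot, ← coeff_zero_eq_eval_zero, hcoeff 0 (by omega)] at hP0
  simp_all

theorem natDegree_le_of_coeff_succ_eq_zero_of_coeff_add_two_eq_zero (hp : IsUpper₁ p) {k : ℕ}
    (hk : p.coeff k ≠ 0) (h1 : p.coeff (k + 1) = 0) (h2 : p.coeff (k + 2) = 0) :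
    p.natDegree ≤ k := by
  have hkN : k ≤ p.natDegree := le_natDegree_of_ne_zero hk
  have hcoeff (m : ℕ) : (derivative^[k] p).coeff m = (m + k).descFactorial k • p.coeff (m + k) :=
    coeff_iterate_derivative p m
  have h := (hp.iterate_derivative hkN).natDegree_eq_zero_of_coeff_one_eq_zero_of_coeff_two_eq_zero
    (by rw [hcoeff, zero_add]; exact smul_ne_zero (Nat.descFactorial_pos.2 le_rfl).ne' hk)
    (by rw [hcoeff, add_comm, h1, smul_zero]) (by rw [hcoeff, add_comm, h2, smul_zero])
  rw [natDegree_iterate_derivative_eq p hkN] at h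
  omega

theorem natDegree_lt_of_coeff_eq_zero_of_coeff_succ_eq_zero (hp : IsUpper₁ p) {i : ℕ}
    (h1 : p.coeff i = 0) (h2 : p.coeff (i + 1) = 0) (hi : p.natTrailingDegree < i) :
    p.natDegree < i := by
  induction i with
  | zero => omega
  | succ k ih =>
    by_cases hk : p.coeff k = 0
    · have : p.natTrailingDegree ≠ k := fun h =>
        hp.ne_zero (coeff_natTrailingDegree_eq_zero.1 (h ▸ hk))
      exact (ih hk h1 (by omega)).trans (lt_add_one k)
    · exact Nat.lt_succ_of_le
        (hp.natDegree_le_of_coeff_succ_eq_zero_of_coeff_add_two_eq_zero hk h1 h2)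

end IsUpper₁

section Families

variable {Φ : ℂ[X][X]}

theorem coeff_natDegree_map_evalRingHom_zero_add_one_eq_zero
    (hΦ : ∀ᶠ t in 𝓝 0, IsUpper₁ (Φ.map (evalRingHom t))) :
    Φ.coeff ((Φ.map (evalRingHom 0)).natDegree + 1) = 0 := by
  set j := (Φ.map (evalRingHom 0)).natDegree
  refine eq_zero_of_eventually_im_mul_nonpos (h := fun t => conj ((Φ.coeff j).eval t))
    (Complex.continuous_conj.comp (Φ.coeff j).continuous).continuousAt ?_ ?_ ?_
  · rw [← coeff_map_evalRingHom, map_ne_zero_iff _ (RingHom.injective _)]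
    exact leadingCoeff_ne_zero.2 hΦ.self_of_nhds.ne_zero
  · rw [← coeff_map_evalRingHom]
    exact coeff_eq_zero_of_natDegree_lt (lt_add_one j)
  · filter_upwards [hΦ] with t ht
    simpa only [coeff_map_evalRingHom] using ht.im_coeff_succ_mul_conj_coeff_nonpos j

theorem eval_zero_leadingCoeff_ne_zero
    (hΦ : ∀ᶠ t in 𝓝 0, IsUpper₁ (Φ.map (evalRingHom t))) : Φ.leadingCoeff.eval 0 ≠ 0 := by
  intro h0
  have hp₀ := hΦ.self_of_nhds.ne_zero
  set j := (Φ.map (evalRingHom 0)).natDegree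
  have hj : j < Φ.natDegree := by
    refine lt_of_le_of_ne natDegree_map_le fun hj => ?_
    refine leadingCoeff_ne_zero.2 hp₀ ?_
    change (Φ.map (evalRingHom 0)).coeff j = 0
    rwa [coeff_map_evalRingHom, hj]
  have htaylor (s : ℝ) (t : ℂ) :
      (taylor (C (s : ℂ)) Φ).map (evalRingHom t) = taylor (s : ℂ) (Φ.map (evalRingHom t)) := by
    simp [taylor_apply, map_comp]
  -- The previous lemma, applied to every real translate `y ↦ y + s`.
  have hhasse (s : ℝ) (t : ℂ) : (hasseDeriv (j + 1) (Φ.map (evalRingHom t))).eval (s : ℂ) = 0 := by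
    have h := coeff_natDegree_map_evalRingHom_zero_add_one_eq_zero (Φ := taylor (C (s : ℂ)) Φ)
      (by filter_upwards [hΦ] with t ht; rw [htaylor]; exact ht.taylor s)
    rw [htaylor, natDegree_taylor] at h
    rw [← taylor_coeff, ← htaylor, coeff_map_evalRingHom, h, eval_zero]
  have hlc : ∀ t : ℂ, Φ.leadingCoeff.eval t = 0 := by
    intro t
    have h := eq_zero_of_infinite_isRoot _
      (Set.infinite_of_injective_forall_mem Complex.ofReal_injective (hhasse · t))
    have := congrArg (coeff · (Φ.natDegree - (j + 1))) h
    simp only [hasseDeriv_coeff, Nat.sub_add_cancel hj, coeff_map_evalRingHom, coeff_zero] at this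
    exact (mul_eq_zero.1 this).resolve_left (by simp [Nat.choose_eq_zero_iff]; omega)
  exact hp₀ (by simp [leadingCoeff_eq_zero.1 (Polynomial.funext (by simpa using hlc))])

end Families

namespace IsUpperY

variable {d : ℕ} {f : (MvPolynomial (Fin d) ℂ)[X]}

theorem isUpper₁_map (hf : IsUpperY f) {σ : Fin d → ℂ} (hσ : ∀ j, 0 < (σ j).im) :
    IsUpper₁ (f.map (MvPolynomial.eval σ)) :=
  fun z hz => by
    rw [eval_map]
    exact hf σ z hσ hz

theorem ne_zero (hf : IsUpperY f) : f ≠ 0 := by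
  rintro rfl
  exact hf (fun _ => Complex.I) Complex.I (fun _ => by simp) (by simp) (eval₂_zero _ _)

theorem eval_leadingCoeff_ne_zero (hf : IsUpperY f) {σ : Fin d → ℂ} (hσ : ∀ j, 0 < (σ j).im) :
    MvPolynomial.eval σ f.leadingCoeff ≠ 0 := by
  -- Restrict to a complex line through `σ` on which the leading coefficient is not identically 0.
  obtain ⟨v, hv⟩ : ∃ v : Fin d → ℂ, MvPolynomial.eval (σ + v) f.leadingCoeff ≠ 0 := by
    by_contra! h
    refine leadingCoeff_ne_zero.2 hf.ne_zero (MvPolynomial.funext fun x => ?_)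
    simpa using h (x - σ)
  set θ : MvPolynomial (Fin d) ℂ →+* ℂ[X] :=
    MvPolynomial.eval₂Hom C fun j => C (σ j) + C (v j) * X
  have hθ (t : ℂ) : (evalRingHom t).comp θ = MvPolynomial.eval (σ + t • v) := by
    refine MvPolynomial.ringHom_ext (fun a => ?_) (fun j => ?_)
    · simp [θ]
    · simp [θ]
      ring
  have hθ_apply (t : ℂ) (q : MvPolynomial (Fin d) ℂ) :
      (θ q).eval t = MvPolynomial.eval (σ + t • v) q := by
    rw [← coe_evalRingHom, ← RingHom.comp_apply, hθ]
  have hnear : ∀ᶠ t in 𝓝 (0 : ℂ), ∀ j, 0 < ((σ + t • v) j).im := by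
    refine eventually_all.2 fun j => ?_
    have : Continuous fun t : ℂ => ((σ + t • v) j).im := by fun_prop
    exact (this.tendsto 0).eventually_const_lt (by simpa using hσ j)
  have hΦ := eval_zero_leadingCoeff_ne_zero (Φ := f.map θ) (by
    filter_upwards [hnear] with t ht
    rw [Polynomial.map_map, hθ]
    exact hf.isUpper₁_map ht)
  rwa [leadingCoeff_map_of_leadingCoeff_ne_zero θ fun h => hv (by simpa [h] using
    (hθ_apply 1 f.leadingCoeff).symm), hθ_apply, zero_smul, add_zero] at hΦ

theorem reverse_comp_neg_X (hf : IsUpperY f) : IsUpperY (f.reverse.comp (-X)) :=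
  fun σ _ hσ hz => eval₂_reverse_comp_neg_X_ne_zero _ (fun z hz => hf σ z hσ hz) hz

theorem eval_trailingCoeff_ne_zero (hf : IsUpperY f) {σ : Fin d → ℂ}
    (hσ : ∀ j, 0 < (σ j).im) : MvPolynomial.eval σ f.trailingCoeff ≠ 0 := by
  have h := hf.reverse_comp_neg_X.eval_leadingCoeff_ne_zero hσ
  rw [comp_neg_X_leadingCoeff_eq, reverse_leadingCoeff, map_mul] at h
  exact right_ne_zero_of_mul h

end IsUpperY

theorem consecutive_coeffs_interlace_general {d : ℕ}
    (f : Polynomial (MvPolynomial (Fin d) ℂ))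
    (hf : IsUpperY f) (i : ℕ)
    (h : ¬(f.coeff i = 0 ∧ f.coeff (i + 1) = 0)) :
    IsUpperY (Polynomial.C (f.coeff i) + Polynomial.X * Polynomial.C (f.coeff (i + 1))) := by
  intro σ τ hσ hτ
  set p := f.map (MvPolynomial.eval σ)
  have hp : IsUpper₁ p := hf.isUpper₁_map hσ
  have hcoeff (k : ℕ) : p.coeff k = MvPolynomial.eval σ (f.coeff k) := coeff_map _ _
  simp only [eval₂_add, eval₂_C, eval₂_mul, eval₂_X, ← hcoeff]
  refine hp.coeff_add_mul_coeff_succ_ne_zero (fun ⟨hi, hi1⟩ => ?_) hτ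
  have htop : p.coeff f.natDegree ≠ 0 := by rw [hcoeff]; exact hf.eval_leadingCoeff_ne_zero hσ
  have hbot : p.coeff f.natTrailingDegree ≠ 0 := by
    rw [hcoeff]; exact hf.eval_trailingCoeff_ne_zero hσ
  have hrange : f.natTrailingDegree ≤ i + 1 ∧ i ≤ f.natDegree := by
    rcases not_and_or.1 h with h | h
    · exact ⟨(natTrailingDegree_le_of_ne_zero h).trans i.le_succ, le_natDegree_of_ne_zero h⟩
    · exact ⟨natTrailingDegree_le_of_ne_zero h, i.le_succ.trans (le_natDegree_of_ne_zero h)⟩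
  have hlow : f.natTrailingDegree < i := by
    have : f.natTrailingDegree ≠ i := fun e => hbot (e ▸ hi)
    have : f.natTrailingDegree ≠ i + 1 := fun e => hbot (e ▸ hi1)
    omega
  have hgap := hp.natDegree_lt_of_coeff_eq_zero_of_coeff_succ_eq_zero hi hi1
    ((natTrailingDegree_le_of_ne_zero hbot).trans_lt hlow)
  have := le_natDegree_of_ne_zero htop
  omega

/-- Consecutive coefficients of an upper polynomial `f = Σᵢ₌₀ⁿ fᵢ(𝐱) yⁱ` interlace:
for `0 ≤ i < n`, if `fᵢ, fᵢ₊₁` are not both zero then `fᵢ + y·fᵢ₊₁ ∈ U_{d+1}`. -/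
theorem consecutive_coeffs_interlace {d : ℕ}
    (f : Polynomial (MvPolynomial (Fin d) ℂ)) (n : ℕ) (hn : f.natDegree ≤ n)
    (hf : IsUpperY f) (i : ℕ) (hi : i < n)
    (h : ¬(f.coeff i = 0 ∧ f.coeff (i + 1) = 0)) :
    IsUpperY (Polynomial.C (f.coeff i) + Polynomial.X * Polynomial.C (f.coeff (i + 1))) :=
  consecutive_coeffs_interlace_general f hf i h
end

section
/- Let f ∈ ℂ[x₁,…,x_d] be an upper polynomial of total degree n, and let f^H be its leading form. Then all coefficients of f^H have the same argument: there exists a nonzero complex number α such that for every monomial, the coefficient of that monomial in f^H divided by α is a nonnegative real number. -/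
/-!
The leading form `h` of an upper polynomial `f` of degree `n` is again upper, by a Hurwitz-type
argument: `h` is the locally uniform limit of `s ^ n f(· / s)` as `s → 0⁺`.

For homogeneous upper `h` and positive real vectors `x`, `y`, the roots of `t ↦ h(t x + y)` are
real and nonpositive (a root elsewhere would put a rotation of `t x + y` in the upper orthant),
so all its coefficients are nonnegative multiples of `h(y)`. For `σ` in the upper orthant the
roots of `t ↦ h(t x + σ)` lie in the lower half-plane, so by Gauss–Lucas the directional
derivative `D_x h` is again upper. Normalising to `h(1) > 0`, induction on the degree shows that
every coefficient of `h` is nonnegative: up to the factor `m i`, the coefficient of `m` is the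
limit as `ε → 0⁺` of a coefficient of `D_{e_i + ε} h`.
-/

open Polynomial Metric Filter
open scoped Topology ComplexOrder

theorem Finsupp.prod_pow_eq_multiset_prod {ι M : Type*} [CommMonoid M] (s : ι →₀ ℕ)
    (f : ι → M) : (s.prod fun j k => f j ^ k) = (s.toMultiset.map f).prod := by
  rw [Finsupp.toMultiset_map, Finsupp.prod_toMultiset,
    Finsupp.prod_mapDomain_index (fun _ => pow_zero _) (fun _ _ _ => pow_add _ _ _)]

namespace MvPolynomial

variable {σ R : Type*}

section CommSemiring

variable [CommSemiring R]

theorem IsHomogeneous.eval_smul {p : MvPolynomial σ R} {n : ℕ} (hp : p.IsHomogeneous n)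
    (c : R) (x : σ → R) : eval (c • x) p = c ^ n * eval x p := by
  rw [eval_eq, eval_eq, Finset.mul_sum]
  refine Finset.sum_congr rfl fun s hs => ?_
  rw [hp.degree_eq_sum_deg_support hs, ← Finset.prod_pow_eq_pow_sum]
  simp only [Pi.smul_apply, smul_eq_mul, mul_pow, Finset.prod_mul_distrib]
  ring

theorem homogeneousComponent_totalDegree_ne_zero {p : MvPolynomial σ R} (hp : p ≠ 0) :
    homogeneousComponent p.totalDegree p ≠ 0 := by
  obtain ⟨m, hm, hdeg⟩ := Finset.exists_mem_eq_sup p.support (support_nonempty.mpr hp)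
    fun s => s.sum fun _ e => e
  intro h0
  have := congrArg (coeff m) h0
  rw [coeff_homogeneousComponent, if_pos (by rw [totalDegree, hdeg]; rfl), coeff_zero] at this
  exact mem_support_iff.mp hm this

noncomputable def lineRestriction (a b : σ → R) : MvPolynomial σ R →ₐ[R] R[X] :=
  aeval fun j => Polynomial.C (a j) * Polynomial.X + Polynomial.C (b j)

theorem eval_lineRestriction (a b : σ → R) (p : MvPolynomial σ R) (t : R) :
    (lineRestriction a b p).eval t = eval (fun j => a j * t + b j) p := by
  rw [lineRestriction, ← Polynomial.coe_aeval_eq_eval, ← AlgHom.comp_apply, comp_aeval,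
    ← MvPolynomial.coe_aeval_eq_eval]
  simp

theorem coeff_lineRestriction_monomial (a b : σ → R) (s : σ →₀ ℕ) (c : R) :
    (lineRestriction a b (monomial s c)).coeff s.degree = eval a (monomial s c) := by
  set L : σ → R[X] := fun j => Polynomial.C (a j) * Polynomial.X + Polynomial.C (b j)
  have hcard : (s.toMultiset.map L).card * 1 = s.degree := by
    simp [Finsupp.card_toMultiset, Finsupp.degree_apply, Finsupp.sum]
  have hL : ∀ p ∈ s.toMultiset.map L, p.natDegree ≤ 1 := by
    simp only [Multiset.mem_map]
    rintro _ ⟨j, -, rfl⟩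
    exact natDegree_linear_le
  rw [lineRestriction, aeval_monomial, eval_monomial, Polynomial.algebraMap_eq,
    Polynomial.coeff_C_mul, Finsupp.prod_pow_eq_multiset_prod, ← hcard,
    coeff_multiset_prod_of_natDegree_le _ _ hL, Multiset.map_map,
    Finsupp.prod_pow_eq_multiset_prod]
  simp [L]

theorem IsHomogeneous.coeff_lineRestriction {p : MvPolynomial σ R} {n : ℕ}
    (hp : p.IsHomogeneous n) (a b : σ → R) : (lineRestriction a b p).coeff n = eval a p := by
  conv_lhs => rw [p.as_sum]
  conv_rhs => rw [p.as_sum]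
  simp only [map_sum, Polynomial.finsetSum_coeff]
  refine Finset.sum_congr rfl fun s hs => ?_
  rw [hp.degree_eq_sum_deg_support hs, ← Finsupp.degree_apply]
  exact coeff_lineRestriction_monomial a b s _

variable [Fintype σ]

noncomputable def dirDeriv (w : σ → R) (p : MvPolynomial σ R) : MvPolynomial σ R :=
  ∑ j, w j • pderiv j p

theorem IsHomogeneous.dirDeriv {p : MvPolynomial σ R} {n : ℕ} (hp : p.IsHomogeneous (n + 1))
    (w : σ → R) : (dirDeriv w p).IsHomogeneous n :=
  IsHomogeneous.sum _ _ _ fun j _ => by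
    simpa [smul_eq_C_mul] using (hp.pderiv (i := j)).C_mul (w j)

theorem dirDeriv_mul_X (w : σ → R) (p : MvPolynomial σ R) (i : σ) :
    dirDeriv w (p * X i) = dirDeriv w p * X i + C (w i) * p := by
  classical
  simp only [dirDeriv, Derivation.leibniz, pderiv_X, smul_eq_C_mul, smul_eq_mul, Pi.single_apply,
    mul_ite, mul_one, mul_zero, mul_add, Finset.sum_add_distrib, Finset.sum_ite_eq,
    Finset.mem_univ, if_true, Finset.sum_mul]
  rw [add_comm]
  congr 1
  exact Finset.sum_congr rfl fun _ _ => by ring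

end CommSemiring

theorem derivative_lineRestriction [CommRing R] [Fintype σ] (a b : σ → R)
    (p : MvPolynomial σ R) :
    derivative (lineRestriction a b p) = lineRestriction a b (dirDeriv a p) := by
  induction p using MvPolynomial.induction_on with
  | C c => simp [lineRestriction, dirDeriv]
  | add p q hp hq => simp only [map_add, hp, hq, dirDeriv, Finset.sum_add_distrib, smul_add]
  | mul_X p i hp =>
    rw [dirDeriv_mul_X, map_mul, derivative_mul, hp]
    simp only [lineRestriction, aeval_X, derivative_mul, derivative_C, zero_mul, derivative_X,
      mul_one, zero_add, add_zero, map_add, map_mul, algHom_C, Polynomial.algebraMap_eq,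
      add_right_inj]
    ring

theorem pow_totalDegree_mul_eval_inv_smul {K : Type*} [Field K] (p : MvPolynomial σ K) {c : K}
    (hc : c ≠ 0) (z : σ → K) :
    c ^ p.totalDegree * eval (c⁻¹ • z) p = ∑ k ∈ Finset.range (p.totalDegree + 1),
      c ^ (p.totalDegree - k) * eval z (homogeneousComponent k p) := by
  nth_rw 2 [← sum_homogeneousComponent p]
  rw [map_sum, Finset.mul_sum]
  refine Finset.sum_congr rfl fun k hk => ?_
  rw [(homogeneousComponent_isHomogeneous k p).eval_smul, inv_pow,
    pow_sub₀ _ hc (Nat.lt_succ_iff.mp (Finset.mem_range.mp hk))]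
  ring

end MvPolynomial

namespace Polynomial

theorem coeff_mul_nonneg {R : Type*} [CommSemiring R] [PartialOrder R] [IsOrderedRing R]
    {p q : R[X]} (hp : ∀ k, 0 ≤ p.coeff k) (hq : ∀ k, 0 ≤ q.coeff k) (k : ℕ) :
    0 ≤ (p * q).coeff k := by
  rw [coeff_mul]
  exact Finset.sum_nonneg fun _ _ => mul_nonneg (hp _) (hq _)

theorem coeff_prod_X_sub_C_nonneg {R : Type*} [CommRing R] [PartialOrder R] [IsOrderedRing R]
    {s : Multiset R} (hs : ∀ r ∈ s, r ≤ 0) (k : ℕ) :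
    0 ≤ (s.map fun r => X - C r).prod.coeff k := by
  refine Multiset.prod_induction (fun P : R[X] => ∀ k, 0 ≤ P.coeff k) _
    (fun _ _ => coeff_mul_nonneg) (fun k => ?_) ?_ k
  · rw [coeff_one]; split_ifs <;> simp
  · simp only [Multiset.mem_map]
    rintro _ ⟨r, hr, rfl⟩ k
    rcases k with _ | _ | k <;> simp [coeff_X, coeff_C, hs r hr]

theorem coeff_nonneg_of_roots_nonpos {q : ℂ[X]} (hroots : ∀ r ∈ q.roots, r ≤ 0)
    (h0 : 0 < q.coeff 0) (k : ℕ) : 0 ≤ q.coeff k := by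
  set P := (q.roots.map fun r => X - C r).prod
  have hq : q = C q.leadingCoeff * P := (IsAlgClosed.splits q).eq_prod_roots
  have hP := coeff_prod_X_sub_C_nonneg hroots
  have hq0 : q.coeff 0 = q.leadingCoeff * P.coeff 0 := by rw [← coeff_C_mul, ← hq]
  have hP0 : 0 < P.coeff 0 := (hP 0).lt_of_ne fun h => h0.ne' (by rw [hq0, ← h, mul_zero])
  have hlc : q.leadingCoeff = q.coeff 0 / P.coeff 0 := eq_div_of_mul_eq hP0.ne' hq0.symm
  rw [hq, coeff_C_mul, hlc]
  exact mul_nonneg (div_pos h0 hP0).le (hP k)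

theorem eval_derivative_ne_zero_of_roots_mem {P : ℂ[X]} {S : Set ℂ} (hS : Convex ℝ S)
    (hP : 0 < P.degree) (hroots : ∀ r ∈ P.roots, r ∈ S) {z : ℂ} (hz : z ∉ S) :
    P.derivative.eval z ≠ 0 := by
  intro h
  have hP' : P.derivative ≠ 0 := by
    rw [Ne, derivative_eq_zero]
    exact (natDegree_pos_iff_degree_pos.mpr hP).ne'
  refine hz (convexHull_min (fun r hr => hroots r ?_) hS
    (rootSet_derivative_subset_convexHull_rootSet hP ((mem_rootSet_of_ne hP').mpr h)))
  rw [mem_rootSet] at hr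
  exact (mem_roots hr.1).mpr (by simpa using hr.2)

end Polynomial

/-- Minimum modulus principle, via the maximum modulus principle for `1 / F`. -/
theorem Complex.exists_eq_zero_of_norm_lt_of_sphere {F : ℂ → ℂ} {c : ℂ} {ρ ε : ℝ} (hρ : 0 < ρ)
    (hF : DifferentiableOn ℂ F (closedBall c ρ)) (hc : ‖F c‖ < ε)
    (hsphere : ∀ z ∈ sphere c ρ, ε ≤ ‖F z‖) : ∃ z ∈ closedBall c ρ, F z = 0 := by
  by_contra! hne
  have hε : 0 < ε := (norm_nonneg _).trans_lt hc
  have hinv : DiffContOnCl ℂ (fun z => (F z)⁻¹) (ball c ρ) := by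
    rw [← closure_ball c hρ.ne'] at hF hne
    exact (hF.inv hne).diffContOnCl
  have := Complex.norm_le_of_forall_mem_frontier_norm_le isBounded_ball hinv (C := ε⁻¹)
    (fun z hz => ?_) (subset_closure (mem_ball_self hρ))
  · rw [norm_inv, inv_le_inv₀ (norm_pos_iff.mpr (hne c (mem_closedBall_self hρ.le))) hε] at this
    linarith
  · rw [frontier_ball c hρ.ne'] at hz
    rw [norm_inv]
    exact inv_anti₀ hε (hsphere z hz)

namespace Polynomial

theorem exists_mem_Ioo_forall_sphere_eval_ne_zero {Q : ℂ[X]} (hQ : Q ≠ 0) (c : ℂ) {δ : ℝ}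
    (hδ : 0 < δ) : ∃ ρ ∈ Set.Ioo 0 δ, ∀ z ∈ sphere c ρ, Q.eval z ≠ 0 := by
  have hfin : ((fun z => dist z c) '' {z | Q.IsRoot z}).Finite :=
    (finite_setOfPred_isRoot hQ).image _
  obtain ⟨ρ, hρ, hρQ⟩ := ((Set.Ioo_infinite hδ).sdiff hfin).nonempty
  exact ⟨ρ, hρ, fun z hz hQz => hρQ ⟨z, hQz, hz⟩⟩

/-- Hurwitz's theorem, for a polynomial limit. -/
theorem eventually_exists_eq_zero_of_tendstoUniformlyOn {ι : Type*} {l : Filter ι}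
    {F : ι → ℂ → ℂ} {Q : ℂ[X]} {c : ℂ} {δ : ℝ} (hQ : Q ≠ 0) (hQc : Q.IsRoot c) (hδ : 0 < δ)
    (hF : ∀ᶠ i in l, DifferentiableOn ℂ (F i) (closedBall c δ))
    (hFQ : TendstoUniformlyOn F Q.eval l (closedBall c δ)) :
    ∀ᶠ i in l, ∃ z ∈ closedBall c δ, F i z = 0 := by
  obtain ⟨ρ, ⟨hρ, hρδ⟩, hQρ⟩ := exists_mem_Ioo_forall_sphere_eval_ne_zero hQ c hδ
  obtain ⟨z₀, hz₀, hmin⟩ := (isCompact_sphere c ρ).exists_isMinOn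
    (NormedSpace.sphere_nonempty.mpr hρ.le) Q.continuous.norm.continuousOn
  have hm : 0 < ‖Q.eval z₀‖ := norm_pos_iff.mpr (hQρ z₀ hz₀)
  have hball : closedBall c ρ ⊆ closedBall c δ := closedBall_subset_closedBall hρδ.le
  filter_upwards [hF, Metric.tendstoUniformlyOn_iff.mp hFQ _ (half_pos hm)] with i hFi hclose
  have hcenter : ‖F i c‖ < ‖Q.eval z₀‖ / 2 := by
    simpa [hQc.eq_zero] using hclose c (mem_closedBall_self hδ.le)
  have hsphere : ∀ z ∈ sphere c ρ, ‖Q.eval z₀‖ / 2 ≤ ‖F i z‖ := fun z hz => by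
    have := hclose z (hball (sphere_subset_closedBall hz))
    rw [dist_eq_norm] at this
    linarith [isMinOn_iff.mp hmin z hz, norm_sub_norm_le (Q.eval z) (F i z)]
  obtain ⟨z, hz, hFz⟩ :=
    Complex.exists_eq_zero_of_norm_lt_of_sphere hρ (hFi.mono hball) hcenter hsphere
  exact ⟨z, hball hz, hFz⟩

end Polynomial

theorem MvPolynomial.exists_eval_inv_smul_eq_zero {ι : Type*} (f : MvPolynomial ι ℂ)
    {v z : ι → ℂ} (hQ : lineRestriction v z (homogeneousComponent f.totalDegree f) ≠ 0)
    (hz : eval z (homogeneousComponent f.totalDegree f) = 0) {δ : ℝ} (hδ : 0 < δ) :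
    ∃ s : ℝ, 0 < s ∧ ∃ u ∈ closedBall (0 : ℂ) δ,
      eval ((s : ℂ)⁻¹ • fun j => v j * u + z j) f = 0 := by
  set Q := lineRestriction v z (homogeneousComponent f.totalDegree f)
  have hQ0 : Q.IsRoot 0 := by simpa [Q, IsRoot, eval_lineRestriction] using hz
  set G : ℝ → ℂ → ℂ := fun s u => ∑ k ∈ Finset.range (f.totalDegree + 1),
    (s : ℂ) ^ (f.totalDegree - k) * (lineRestriction v z (homogeneousComponent k f)).eval u
  have hGQ : G 0 = Q.eval := by
    funext u
    simp only [G]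
    rw [Finset.sum_range_succ, Finset.sum_eq_zero fun k hk => by
      simp [Nat.sub_ne_zero_of_lt (Finset.mem_range.mp hk)]]
    simp [Q]
  have hGf : ∀ s : ℝ, s ≠ 0 → ∀ u, G s u =
      (s : ℂ) ^ f.totalDegree * eval ((s : ℂ)⁻¹ • fun j => v j * u + z j) f := fun s hs u => by
    rw [pow_totalDegree_mul_eval_inv_smul _ (by exact_mod_cast hs)]
    simp [G, eval_lineRestriction]
  have hunif : TendstoUniformlyOn G Q.eval (𝓝 0) (closedBall 0 δ) := by
    rw [← hGQ, tendstoUniformlyOn_iff_tendstoUniformly_comp_coe]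
    exact Continuous.tendstoUniformly (fun s (u : closedBall (0 : ℂ) δ) => G s u) (by fun_prop) 0
  obtain ⟨s, ⟨u, hu, hGu⟩, hs⟩ := ((eventually_exists_eq_zero_of_tendstoUniformlyOn hQ hQ0 hδ
    (Eventually.of_forall fun s => by fun_prop) hunif).filter_mono nhdsWithin_le_nhds |>.and
    (self_mem_nhdsWithin (s := Set.Ioi 0))).exists
  rw [hGf s hs.ne'] at hGu
  exact ⟨s, hs, u, hu,
    (mul_eq_zero.mp hGu).resolve_left (pow_ne_zero _ (by exact_mod_cast hs.ne'))⟩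

theorem nonneg_of_forall_pos_add_smul_nonneg {E : Type*} [TopologicalSpace E] [AddCommGroup E]
    [Module ℝ E] [ContinuousSMul ℝ E] [ContinuousAdd E] [Preorder E] [ClosedIciTopology E]
    {u v : E} (h : ∀ ε : ℝ, 0 < ε → 0 ≤ u + ε • v) : 0 ≤ u := by
  have hlim : Tendsto (fun ε : ℝ => u + ε • v) (𝓝[>] 0) (𝓝 u) := by
    refine (Continuous.tendsto' ?_ 0 u ?_).mono_left nhdsWithin_le_nhds <;> [fun_prop; simp]
  exact ge_of_tendsto hlim (eventually_nhdsWithin_of_forall h)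

open MvPolynomial

namespace IsUpper

variable {d n : ℕ} {h : MvPolynomial (Fin d) ℂ}

theorem C_mul (hf : IsUpper h) {c : ℂ} (hc : c ≠ 0) : IsUpper (MvPolynomial.C c * h) :=
  fun σ hσ => by
    rw [map_mul, MvPolynomial.eval_C]
    exact mul_ne_zero hc (hf σ hσ)

theorem eval_ne_zero_of_im_mul_pos (hf : IsUpper h) (hh : h.IsHomogeneous n) {c : ℂ}
    {z : Fin d → ℂ} (hz : ∀ i, 0 < (c * z i).im) : eval z h ≠ 0 := by
  intro h0
  exact hf (c • z) hz (by rw [hh.eval_smul, h0, mul_zero])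

theorem eval_ne_zero_of_pos (hf : IsUpper h) (hh : h.IsHomogeneous n) {x : Fin d → ℂ}
    (hx : ∀ i, 0 < x i) : eval x h ≠ 0 :=
  hf.eval_ne_zero_of_im_mul_pos hh (c := Complex.I) fun i => by
    simpa using (Complex.pos_iff.mp (hx i)).1

theorem roots_lineRestriction_nonpos (hf : IsUpper h) (hh : h.IsHomogeneous n)
    {x y : Fin d → ℂ} (hx : ∀ i, 0 < x i) (hy : ∀ i, 0 < y i) :
    ∀ r ∈ (lineRestriction x y h).roots, r ≤ 0 := by
  intro r hr
  have hroot : eval (fun j => x j * r + y j) h = 0 := by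
    rw [← eval_lineRestriction]; exact (mem_roots'.mp hr).2
  have hx' := fun i => Complex.pos_iff.mp (hx i)
  have hy' := fun i => Complex.pos_iff.mp (hy i)
  have him : ∀ i, (x i * r + y i).im = (x i).re * r.im := fun i => by
    simp [Complex.mul_im, ← (hx' i).2, ← (hy' i).2]
  have hre : ∀ i, (x i * r + y i).re = (x i).re * r.re + (y i).re := fun i => by
    simp [Complex.mul_re, ← (hx' i).2]
  rw [Complex.nonpos_iff]
  rcases lt_trichotomy r.im 0 with hneg | hzero | hpos
  · refine absurd hroot (hf.eval_ne_zero_of_im_mul_pos hh (c := -1) fun i => ?_)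
    rw [neg_one_mul, Complex.neg_im, him]
    nlinarith [(hx' i).1]
  · refine ⟨not_lt.mp fun hpos => hf.eval_ne_zero_of_im_mul_pos hh (c := Complex.I)
      (fun i => ?_) hroot, hzero⟩
    rw [Complex.I_mul_im, hre]
    nlinarith [(hx' i).1, (hy' i).1]
  · exact absurd hroot (hf _ fun i => by rw [him]; exact mul_pos (hx' i).1 hpos)

theorem roots_lineRestriction_im_neg (hf : IsUpper h) {x σ : Fin d → ℂ} (hx : ∀ i, 0 < x i)
    (hσ : ∀ i, 0 < (σ i).im) : ∀ r ∈ (lineRestriction x σ h).roots, r.im < 0 := by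
  intro r hr
  by_contra! him
  have hroot := (mem_roots'.mp hr).2
  rw [IsRoot, eval_lineRestriction] at hroot
  refine hf _ (fun i => ?_) hroot
  obtain ⟨hxre, hxim⟩ := Complex.pos_iff.mp (hx i)
  simp only [Complex.add_im, Complex.mul_im, ← hxim, zero_mul, add_zero]
  nlinarith [hσ i]

theorem dirDeriv (hf : IsUpper h) (hh : h.IsHomogeneous (n + 1)) {w : Fin d → ℂ}
    (hw : ∀ i, 0 < w i) : IsUpper (dirDeriv w h) := by
  intro σ hσ
  set q := lineRestriction w σ h
  have hdeg : 0 < q.degree := by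
    have hq : q.coeff (n + 1) ≠ 0 := by
      rw [hh.coeff_lineRestriction]; exact hf.eval_ne_zero_of_pos hh hw
    exact lt_of_lt_of_le (by exact_mod_cast n.succ_pos) (le_degree_of_ne_zero hq)
  have := eval_derivative_ne_zero_of_roots_mem (convex_halfSpace_lt Complex.imLm.isLinear 0)
    hdeg (hf.roots_lineRestriction_im_neg hw hσ) (z := 0) (by simp)
  simpa [q, derivative_lineRestriction, eval_lineRestriction] using this

theorem eval_dirDeriv_pos (hf : IsUpper h) (hh : h.IsHomogeneous (n + 1)) {x y : Fin d → ℂ}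
    (hx : ∀ i, 0 < x i) (hy : ∀ i, 0 < y i) (h0 : 0 < eval y h) :
    0 < eval y (MvPolynomial.dirDeriv x h) := by
  set q := lineRestriction x y h
  have hq0 : 0 < q.coeff 0 := by simpa [q, coeff_zero_eq_eval_zero, eval_lineRestriction]
  have hq1 : q.coeff 1 = eval y (MvPolynomial.dirDeriv x h) := by
    have := congrArg (Polynomial.eval 0) (derivative_lineRestriction x y h)
    rw [← coeff_zero_eq_eval_zero, coeff_derivative, eval_lineRestriction] at this
    simpa using this
  refine lt_of_le_of_ne ?_ (hf.dirDeriv hh hx |>.eval_ne_zero_of_pos (hh.dirDeriv x) hy).symm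
  rw [← hq1]
  exact coeff_nonneg_of_roots_nonpos (hf.roots_lineRestriction_nonpos hh hx hy) hq0 1

theorem coeff_nonneg (hf : IsUpper h) (hh : h.IsHomogeneous n) {y : Fin d → ℂ}
    (hy : ∀ i, 0 < y i) (h0 : 0 < eval y h) (m : Fin d →₀ ℕ) : 0 ≤ coeff m h := by
  induction n generalizing h m with
  | zero =>
    rw [totalDegree_eq_zero_iff_eq_C.mp (Nat.le_zero.mp hh.totalDegree_le)] at h0 ⊢
    rw [MvPolynomial.eval_C] at h0
    rw [MvPolynomial.coeff_C]
    split_ifs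
    exacts [h0.le, le_rfl]
  | succ n ih =>
    obtain rfl | ⟨i, hi⟩ := eq_or_ne m 0 |>.imp_right Finsupp.ne_iff.mp
    · rw [hh.coeff_eq_zero (by simp)]
    set m' := m - Finsupp.single i 1
    have hm : m' + Finsupp.single i 1 = m :=
      tsub_add_cancel_of_le (Finsupp.single_le_iff.mpr (Nat.one_le_iff_ne_zero.mpr hi))
    have key : ∀ ε : ℝ, 0 < ε →
        0 ≤ coeff m' (pderiv i h) + ε • coeff m' (MvPolynomial.dirDeriv 1 h) := by
      intro ε hε
      set w : Fin d → ℂ := Pi.single i 1 + fun _ => (ε : ℂ)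
      have hw : ∀ j, 0 < w j := fun j => by
        refine add_pos_of_nonneg_of_pos ?_ (Complex.zero_lt_real.mpr hε)
        rcases eq_or_ne j i with rfl | hj <;> simp [*]
      have hsplit :
          MvPolynomial.dirDeriv w h = pderiv i h + (ε : ℂ) • MvPolynomial.dirDeriv 1 h := by
        simp [w, MvPolynomial.dirDeriv, add_smul, Finset.sum_add_distrib, Finset.smul_sum,
          Pi.single_apply]
      have := ih (hf.dirDeriv hh hw) (hh.dirDeriv w) (hf.eval_dirDeriv_pos hh hw hy h0) m'
      rwa [hsplit, MvPolynomial.coeff_add, MvPolynomial.coeff_smul, smul_eq_mul,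
        ← Complex.real_smul] at this
    have := nonneg_of_forall_pos_add_smul_nonneg key
    rw [coeff_pderiv, hm] at this
    have hpos : (0 : ℂ) < m' i + 1 := by exact_mod_cast (m' i).succ_pos
    simpa [hpos.ne'] using div_nonneg this hpos.le

theorem homogeneousComponent_totalDegree {f : MvPolynomial (Fin d) ℂ} (hf : IsUpper f) :
    IsUpper (homogeneousComponent f.totalDegree f) := by
  intro σ hσ hσ0
  have hf0 : f ≠ 0 := by rintro rfl; exact hf (fun _ => Complex.I) (by simp) (by simp)
  obtain ⟨w, hw⟩ : ∃ w, eval w (homogeneousComponent f.totalDegree f) ≠ 0 := by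
    by_contra! H
    exact homogeneousComponent_totalDegree_ne_zero hf0
      (MvPolynomial.funext fun x => by simpa using H x)
  set v := w - σ
  have hQ : lineRestriction v σ (homogeneousComponent f.totalDegree f) ≠ 0 := fun hQ => hw <| by
    simpa [v, eval_lineRestriction] using congrArg (Polynomial.eval 1) hQ
  obtain ⟨δ, hδ, hball⟩ : ∃ δ > 0, ∀ u ∈ closedBall (0 : ℂ) δ, ∀ i, 0 < (v i * u + σ i).im := by
    refine Metric.nhds_basis_closedBall.eventually_iff.mp (eventually_all.mpr fun i => ?_)
    exact (Continuous.tendsto' (by fun_prop) 0 _ rfl).eventually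
      (lt_mem_nhds (by simpa using hσ i))
  obtain ⟨s, hs, u, hu, hfu⟩ := exists_eval_inv_smul_eq_zero f hQ hσ0 hδ
  exact hf _ (fun i => by simpa [Complex.mul_im] using mul_pos (inv_pos.mpr hs) (hball u hu i)) hfu

end IsUpper

/-- All coefficients of the leading form `f^H` of an upper polynomial have the
same argument: every coefficient is a nonnegative real multiple of a fixed
nonzero complex number `α`. -/
theorem leadingForm_coeffs_same_argument {d : ℕ} (f : MvPolynomial (Fin d) ℂ)
    (hf : IsUpper f) :
    ∃ α : ℂ, α ≠ 0 ∧ ∀ m : Fin d →₀ ℕ, ∃ r : ℝ, 0 ≤ r ∧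
      (MvPolynomial.homogeneousComponent f.totalDegree f).coeff m = α * r := by
  set h := homogeneousComponent f.totalDegree f
  have hup : IsUpper h := hf.homogeneousComponent_totalDegree
  have hhom : h.IsHomogeneous f.totalDegree := homogeneousComponent_isHomogeneous _ _
  set α := eval (fun _ => 1) h
  have hα : α ≠ 0 := hup.eval_ne_zero_of_pos hhom fun _ => one_pos
  refine ⟨α, hα, fun m => ?_⟩
  have hnonneg : 0 ≤ α⁻¹ * coeff m h := by
    have hpos : 0 < eval (fun _ => 1) (MvPolynomial.C α⁻¹ * h) := by
      rw [map_mul, MvPolynomial.eval_C, inv_mul_cancel₀ hα]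
      exact one_pos
    simpa using (hup.C_mul (inv_ne_zero hα)).coeff_nonneg (hhom.C_mul _) (fun _ => one_pos)
      hpos m
  refine ⟨(α⁻¹ * coeff m h).re, (Complex.nonneg_iff.mp hnonneg).1, ?_⟩
  rw [← Complex.eq_re_of_ofReal_le (by exact_mod_cast hnonneg), ← mul_assoc, mul_inv_cancel₀ hα,
    one_mul]
end
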